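/- arXiv:2502.09418 — 2 statements merged into one kernel-verified Lean document; each statement's English description precedes it below -/
import Mathlib

section
/- Let D be a Krull ring (a completely integrally closed Mori ring) and R ⊆ D a subring with T(R) = T(D) such that D = R·D^×, D^× ∩ R = R^×, and (R : D) is a maximal v-ideal of R. Then the inclusion R^• ↪ D^• is a transfer homomorphism and 𝓛(R) = 𝓛(D). -/
namespace Paper

/-- The set of regular elements of a subset `A` of an ambient commutative ring `T`:
the elements of `A` that are non-zero-divisors on `A`. -/
def reg {T : Type*} [CommRing T] (A : Set T) : Set T :=
  {x | x ∈ A ∧ ∀ y ∈ A, x * y = 0 → y = 0}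

/-- The units of a subset `A`: the elements of `A` having an inverse in `A`. -/
def unitsIn {T : Type*} [CommRing T] (A : Set T) : Set T :=
  {x | x ∈ A ∧ ∃ y ∈ A, x * y = 1}

/-- `(R : X) = {z ∈ T : z·X ⊆ R}`. -/
def colonS {T : Type*} [CommRing T] (R : Subring T) (X : Set T) : Set T :=
  {z : T | ∀ x ∈ X, z * x ∈ R}

/-- The `v`-operation `X ↦ X_v = (X⁻¹)⁻¹ = (R : (R : X))`. -/
def vOp {T : Type*} [CommRing T] (R : Subring T) (X : Set T) : Set T :=
  colonS R (colonS R X)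

/-- An integral `v`-ideal (divisorial ideal) of `R`. -/
def IsVIdeal {T : Type*} [CommRing T] (R : Subring T) (I : Set T) : Prop :=
  I ⊆ (R : Set T) ∧ vOp R I = I

/-- A maximal `v`-ideal of `R`: maximal among proper integral `v`-ideals of `R`. -/
def IsMaxVIdeal {T : Type*} [CommRing T] (R : Subring T) (I : Set T) : Prop :=
  IsVIdeal R I ∧ I ≠ (R : Set T) ∧
    ∀ J : Set T, IsVIdeal R J → J ≠ (R : Set T) → I ⊆ J → J = I

/-- The conductor `(R : D) = {x ∈ T : x·D ⊆ R}`, taken inside the ambient ring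
`T`, which plays the role of the total quotient ring. -/
def conductor {T : Type*} [CommRing T] (R D : Subring T) : Set T :=
  {x : T | ∀ d ∈ (D : Set T), x * d ∈ R}

/-- The inclusion of the multiplicative monoid `H` into `B` (both viewed as
submonoids of the ambient ring) is a transfer homomorphism:
(T1) `B = H·B^×` and `H ∩ B^× = H^×`;
(T2) every factorization `u = b·c` in `B` of an element `u ∈ H` lifts to a
factorization `u = v·w` in `H` with `v`, `w` associated to `b`, `c`. -/
def IsTransferIncl {T : Type*} [CommRing T] (H B : Set T) : Prop :=
  (B = {x | ∃ a ∈ H, ∃ u ∈ unitsIn B, x = a * u}) ∧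
  (H ∩ unitsIn B = unitsIn H) ∧
  ∀ u ∈ H, ∀ b ∈ B, ∀ c ∈ B, u = b * c →
    ∃ v ∈ H, ∃ w ∈ H, ∃ ε ∈ unitsIn B, ∃ η ∈ unitsIn B,
      u = v * w ∧ v = b * ε ∧ w = c * η

/-- `a` is an atom of the subring `R`: a regular non-unit of `R` admitting no
factorization into two non-units of `R`. -/
def IsAtomOf {T : Type*} [CommRing T] (R : Subring T) (a : T) : Prop :=
  a ∈ reg (R : Set T) ∧ a ∉ unitsIn (R : Set T) ∧
    ∀ b ∈ (R : Set T), ∀ c ∈ (R : Set T), a = b * c →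
      b ∈ unitsIn (R : Set T) ∨ c ∈ unitsIn (R : Set T)

/-- The set of lengths `L(a)` of `a` in `R`: `{0}` if `a` is a unit of `R`,
and otherwise the set of all `k` such that `a` is a product of `k` atoms of `R`. -/
def lengthSet {T : Type*} [CommRing T] (R : Subring T) (a : T) : Set ℕ :=
  {k | (a ∈ unitsIn (R : Set T) ∧ k = 0) ∨
    (a ∉ unitsIn (R : Set T) ∧
      ∃ f : Fin k → T, (∀ i, IsAtomOf R (f i)) ∧ a = ∏ i, f i)}

/-- The system of sets of lengths `𝓛(R) = {L(a) : a ∈ R^•}`. -/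
def lengthSystem {T : Type*} [CommRing T] (R : Subring T) : Set (Set ℕ) :=
  {S | ∃ a ∈ reg (R : Set T), S = lengthSet R a}

/-- `D` is completely integrally closed in the ambient total quotient ring `T`:
every almost integral element of `T` lies in `D`. -/
def IsCIC {T : Type*} [CommRing T] (D : Subring T) : Prop :=
  ∀ x : T, (∃ c ∈ reg (D : Set T), ∀ n : ℕ, c * x ^ n ∈ D) → x ∈ D

/-- `D` is a Mori ring: the ascending chain condition holds on regular
divisorial integral ideals of `D`. -/
def IsMoriRing {T : Type*} [CommRing T] (D : Subring T) : Prop :=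
  ∀ f : ℕ → Set T,
    (∀ n, f n ⊆ (D : Set T) ∧ vOp D (f n) = f n ∧ ∃ x ∈ f n, x ∈ reg (D : Set T)) →
    (∀ n, f n ⊆ f (n + 1)) → ∃ n, ∀ m, n ≤ m → f m = f n


section Helpers

variable {T : Type*} [CommRing T]

lemma reg_mul' {D : Subring T} {x y : T} (hx : x ∈ reg (D : Set T))
    (hy : y ∈ reg (D : Set T)) : x * y ∈ reg (D : Set T) := by
  refine ⟨mul_mem hx.1 hy.1, fun z hz h0 => ?_⟩
  have hyz : y * z = 0 := hx.2 (y * z) (mul_mem hy.1 hz) (by rw [← mul_assoc]; exact h0)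
  exact hy.2 z hz hyz

lemma unit_reg' {D : Subring T} {x : T} (hx : x ∈ unitsIn (D : Set T)) :
    x ∈ reg (D : Set T) := by
  obtain ⟨hxD, y, hyD, hxy⟩ := hx
  refine ⟨hxD, fun z hz h0 => ?_⟩
  have : y * (x * z) = z := by rw [← mul_assoc, mul_comm y x, hxy, one_mul]
  rw [← this, h0, mul_zero]

lemma unitsIn_reg' {D : Subring T} {x : T} :
    x ∈ unitsIn (reg (D : Set T)) ↔ x ∈ unitsIn (D : Set T) := by
  constructor
  · rintro ⟨hx, y, hy, h⟩; exact ⟨hx.1, y, hy.1, h⟩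
  · rintro ⟨hx, y, hy, h⟩
    exact ⟨unit_reg' ⟨hx, y, hy, h⟩, y,
      unit_reg' ⟨hy, x, hx, by rw [mul_comm]; exact h⟩, h⟩

lemma unit_factor' (D : Subring T) {x y : T} (hx : x ∈ (D : Set T)) (hy : y ∈ (D : Set T))
    (h : x * y ∈ unitsIn (D : Set T)) : x ∈ unitsIn (D : Set T) := by
  obtain ⟨_, z, hz, hxyz⟩ := h
  exact ⟨hx, y * z, mul_mem hy hz, by rw [← mul_assoc]; exact hxyz⟩

lemma unit_mul' (D : Subring T) {x y : T} (hx : x ∈ unitsIn (D : Set T))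
    (hy : y ∈ unitsIn (D : Set T)) : x * y ∈ unitsIn (D : Set T) := by
  obtain ⟨hxD, x', hx', hxx⟩ := hx
  obtain ⟨hyD, y', hy', hyy⟩ := hy
  refine ⟨mul_mem hxD hyD, x' * y', mul_mem hx' hy', ?_⟩
  calc x * y * (x' * y') = (x * x') * (y * y') := by ring
    _ = 1 := by rw [hxx, hyy, mul_one]

lemma colonS_anti (R : Subring T) {X Y : Set T} (h : X ⊆ Y) :
    colonS R Y ⊆ colonS R X := fun z hz x hx => hz x (h hx)

lemma subset_colonS_colonS (R : Subring T) (X : Set T) :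
    X ⊆ colonS R (colonS R X) := fun x hx z hz => by
  rw [mul_comm]; exact hz x hx

lemma vOp_colonS (R : Subring T) (X : Set T) :
    vOp R (colonS R X) = colonS R X :=
  Set.Subset.antisymm (colonS_anti R (subset_colonS_colonS R X))
    (subset_colonS_colonS R (colonS R X))

lemma one_reg' (D : Subring T) : (1 : T) ∈ reg (D : Set T) :=
  ⟨one_mem D, fun y _ h => by rwa [one_mul] at h⟩

lemma prod_reg' (D : Subring T) : ∀ (k : ℕ) (g : Fin k → T),
    (∀ i, g i ∈ reg (D : Set T)) → (∏ i, g i) ∈ reg (D : Set T) := by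
  intro k
  induction k with
  | zero => intro g _; simpa using one_reg' D
  | succ k IH =>
    intro g hg
    rw [Fin.prod_univ_succ]
    exact reg_mul' (hg 0) (IH _ (fun i => hg i.succ))

end Helpers

/-- if moreover `D` is a Krull ring (completely integrally closed
and Mori), then the inclusion `R^• ↪ D^•` is a transfer homomorphism and
`𝓛(R) = 𝓛(D)`. -/
theorem stmt7 {T : Type*} [CommRing T] [Nontrivial T] (R D : Subring T) (hRD : R ≤ D)
    (hDreg : ∀ x ∈ reg (D : Set T), IsUnit x)
    (hDfr : ∀ t : T, ∃ d ∈ (D : Set T), ∃ s ∈ reg (D : Set T), t * s = d)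
    (hRreg : reg (R : Set T) ⊆ reg (D : Set T))
    (hRfr : ∀ t : T, ∃ r ∈ (R : Set T), ∃ s ∈ reg (R : Set T), t * s = r)
    (hgen : ∀ d ∈ (D : Set T), ∃ r ∈ (R : Set T), ∃ u ∈ unitsIn (D : Set T), d = r * u)
    (hun : unitsIn (D : Set T) ∩ (R : Set T) = unitsIn (R : Set T))
    (hmax : IsMaxVIdeal R (conductor R D))
    (hcic : IsCIC D) (hmori : IsMoriRing D) :
    IsTransferIncl (reg (R : Set T)) (reg (D : Set T)) ∧
      lengthSystem R = lengthSystem D := by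
  -- basic consequences of the hypotheses
  have hsub : (R : Set T) ⊆ (D : Set T) := fun x hx => hRD hx
  have unitRD : ∀ x, x ∈ unitsIn (R : Set T) → x ∈ unitsIn (D : Set T) := by
    rintro x ⟨hx, y, hy, h⟩; exact ⟨hsub hx, y, hsub hy, h⟩
  have regRmem : ∀ x, x ∈ (R : Set T) → x ∈ reg (D : Set T) → x ∈ reg (R : Set T) := by
    rintro x hxR ⟨_, hreg⟩
    exact ⟨hxR, fun y hy h0 => hreg y (hsub hy) h0⟩
  have unitR_of : ∀ x, x ∈ unitsIn (D : Set T) → x ∈ (R : Set T) →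
      x ∈ unitsIn (R : Set T) := by
    intro x h1 h2; rw [← hun]; exact ⟨h1, h2⟩
  have fsub : conductor R D ⊆ (R : Set T) := by
    intro x hx
    have := hx 1 (one_mem D); rwa [mul_one] at this
  have fD : ∀ x ∈ conductor R D, ∀ d ∈ (D : Set T), x * d ∈ conductor R D := by
    intro x hx d hd d' hd'
    rw [mul_assoc]; exact hx _ (mul_mem hd hd')
  -- the key consequence of the conductor being a maximal v-ideal
  have key : ∀ w ∈ (D : Set T), w ∉ (R : Set T) → ∀ v ∈ (R : Set T),
      v * w ∈ (R : Set T) → v ∈ conductor R D := by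
    intro w hwD hwR v hvR hvw
    have hIsub : colonS R {1, w} ⊆ (R : Set T) := by
      intro z hz
      have := hz 1 (Set.mem_insert 1 {w}); rwa [mul_one] at this
    have hIv : IsVIdeal R (colonS R {1, w}) := ⟨hIsub, vOp_colonS R _⟩
    have hfI : conductor R D ⊆ colonS R {1, w} := by
      intro x hx t ht
      rcases ht with rfl | ht
      · exact hx 1 (one_mem D)
      · rw [Set.mem_singleton_iff] at ht; rw [ht]; exact hx w hwD
    have hne : colonS R {1, w} ≠ (R : Set T) := by
      intro h
      have h1 : (1 : T) ∈ colonS R {1, w} := h ▸ (one_mem R)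
      have := h1 w (Set.mem_insert_of_mem 1 rfl)
      rw [one_mul] at this; exact hwR this
    have hIf : colonS R {1, w} = conductor R D := hmax.2.2 _ hIv hne hfI
    rw [← hIf]
    intro t ht
    rcases ht with rfl | ht
    · rwa [mul_one]
    · rw [Set.mem_singleton_iff] at ht; rw [ht]; exact hvw
  -- the lifting property (T2)
  have lift : ∀ u ∈ (R : Set T), ∀ b ∈ reg (D : Set T), ∀ c ∈ reg (D : Set T),
      u = b * c →
      ∃ v ∈ reg (R : Set T), ∃ w ∈ reg (R : Set T), ∃ ε ∈ unitsIn (reg (D : Set T)),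
        ∃ η ∈ unitsIn (reg (D : Set T)), u = v * w ∧ v = b * ε ∧ w = c * η := by
    intro u hu b hb c hc huv
    obtain ⟨r, hrR, ε₀, hε₀u, hbr⟩ := hgen b hb.1
    obtain ⟨hε₀D, ε₀', hε₀'D, hεε⟩ := hε₀u
    have hε₀u : ε₀ ∈ unitsIn (D : Set T) := ⟨hε₀D, ε₀', hε₀'D, hεε⟩
    have hε₀'u : ε₀' ∈ unitsIn (D : Set T) := ⟨hε₀'D, ε₀, hε₀D, by rw [mul_comm]; exact hεε⟩
    have hrb : r = b * ε₀' := by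
      rw [hbr, mul_assoc, hεε, mul_one]
    have huw : u = r * (c * ε₀) := by rw [huv, hbr]; ring
    by_cases hw₀ : c * ε₀ ∈ (R : Set T)
    · exact ⟨r, regRmem r hrR (hrb ▸ reg_mul' hb (unit_reg' hε₀'u)),
        c * ε₀, regRmem _ hw₀ (reg_mul' hc (unit_reg' hε₀u)),
        ε₀', unitsIn_reg'.mpr hε₀'u, ε₀, unitsIn_reg'.mpr hε₀u, huw, hrb, rfl⟩
    · have hbf : b ∈ conductor R D := by
        have hrf : r ∈ conductor R D :=
          key (c * ε₀) (mul_mem hc.1 hε₀D) hw₀ r hrR (by rw [← huw]; exact hu)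
        rw [hbr]; exact fD r hrf ε₀ hε₀D
      obtain ⟨s, hsR, η₀, hη₀u, hcs⟩ := hgen c hc.1
      obtain ⟨hη₀D, η₀', hη₀'D, hηη⟩ := hη₀u
      have hη₀u : η₀ ∈ unitsIn (D : Set T) := ⟨hη₀D, η₀', hη₀'D, hηη⟩
      have hη₀'u : η₀' ∈ unitsIn (D : Set T) := ⟨hη₀'D, η₀, hη₀D, by rw [mul_comm]; exact hηη⟩
      have hsc : s = c * η₀' := by rw [hcs, mul_assoc, hηη, mul_one]
      have husv : u = (b * η₀) * s := by rw [huv, hcs]; ring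
      by_cases hv' : b * η₀ ∈ (R : Set T)
      · exact ⟨b * η₀, regRmem _ hv' (reg_mul' hb (unit_reg' hη₀u)),
          s, regRmem s hsR (hsc ▸ reg_mul' hc (unit_reg' hη₀'u)),
          η₀, unitsIn_reg'.mpr hη₀u, η₀', unitsIn_reg'.mpr hη₀'u, husv, rfl, hsc⟩
      · have hcf : c ∈ conductor R D := by
          have hsf : s ∈ conductor R D :=
            key (b * η₀) (mul_mem hb.1 hη₀D) hv' s hsR
              (by rw [mul_comm, ← husv]; exact hu)
          rw [hcs]; exact fD s hsf η₀ hη₀D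
        have h1u : (1 : T) ∈ unitsIn (reg (D : Set T)) :=
          unitsIn_reg'.mpr ⟨one_mem D, 1, one_mem D, mul_one 1⟩
        exact ⟨b, regRmem b (fsub hbf) hb, c, regRmem c (fsub hcf) hc,
          1, h1u, 1, h1u, huv, (mul_one b).symm, (mul_one c).symm⟩
  -- atoms of R are atoms of D and conversely
  have assocAtomR : ∀ a, IsAtomOf D a → ∀ ε ∈ unitsIn (D : Set T), ∀ v,
      v ∈ reg (R : Set T) → v = a * ε → IsAtomOf R v := by
    intro a ha ε hεu v hv hva
    obtain ⟨hεD, ε', hε'D, hεε⟩ := hεu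
    have hεu : ε ∈ unitsIn (D : Set T) := ⟨hεD, ε', hε'D, hεε⟩
    refine ⟨hv, ?_, ?_⟩
    · intro hvu
      exact ha.2.1 (unit_factor' D ha.1.1 hεD (hva ▸ unitRD v hvu))
    · intro b' hb' c' hc' hvbc
      have hag : a = b' * (c' * ε') := by
        have : a = v * ε' := by rw [hva, mul_assoc, hεε, mul_one]
        rw [this, hvbc]; ring
      rcases ha.2.2 b' (hsub hb') (c' * ε') (mul_mem (hsub hc') hε'D) hag with h | h
      · exact Or.inl (unitR_of b' h hb')
      · exact Or.inr (unitR_of c' (unit_factor' D (hsub hc') hε'D h) hc')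
  have atomRD : ∀ a, IsAtomOf R a → IsAtomOf D a := by
    intro a ha
    have hareg : a ∈ reg (D : Set T) := hRreg ha.1
    refine ⟨hareg, fun hu => ha.2.1 (unitR_of a hu ha.1.1), ?_⟩
    intro b hbD c hcD habc
    have hbreg : b ∈ reg (D : Set T) := by
      refine ⟨hbD, fun z hz h0 => hareg.2 z hz ?_⟩
      calc a * z = b * z * c := by rw [habc]; ring
        _ = 0 := by rw [h0, zero_mul]
    have hcreg : c ∈ reg (D : Set T) := by
      refine ⟨hcD, fun z hz h0 => hareg.2 z hz ?_⟩
      calc a * z = c * z * b := by rw [habc]; ring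
        _ = 0 := by rw [h0, zero_mul]
    obtain ⟨v, hv, w, hw, ε, hε, η, hη, huvw, hvb, hwc⟩ :=
      lift a ha.1.1 b hbreg c hcreg habc
    rcases ha.2.2 v hv.1 w hw.1 huvw with h | h
    · obtain ⟨_, y, hyD, hvy⟩ := unitRD v h
      exact Or.inl ⟨hbD, ε * y,
        mul_mem (unitsIn_reg'.mp hε).1 hyD, by rw [← mul_assoc, ← hvb]; exact hvy⟩
    · obtain ⟨_, y, hyD, hwy⟩ := unitRD w h
      exact Or.inr ⟨hcD, η * y,
        mul_mem (unitsIn_reg'.mp hη).1 hyD, by rw [← mul_assoc, ← hwc]; exact hwy⟩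
  have atomDR : ∀ a, a ∈ (R : Set T) → IsAtomOf D a → IsAtomOf R a := by
    intro a haR ha
    exact assocAtomR a ha 1 ⟨one_mem D, 1, one_mem D, mul_one 1⟩ a
      (regRmem a haR ha.1) (by rw [mul_one])
  have atomDU : ∀ a, IsAtomOf D a → ∀ ε ∈ unitsIn (D : Set T), IsAtomOf D (a * ε) := by
    intro a ha ε hεu
    obtain ⟨hεD, ε', hε'D, hεε⟩ := hεu
    have hεu : ε ∈ unitsIn (D : Set T) := ⟨hεD, ε', hε'D, hεε⟩
    refine ⟨reg_mul' ha.1 (unit_reg' hεu), ?_, ?_⟩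
    · intro h; exact ha.2.1 (unit_factor' D ha.1.1 hεD h)
    · intro b hbD c hcD habc
      have hag : a = b * (c * ε') := by
        have : a = (a * ε) * ε' := by rw [mul_assoc, hεε, mul_one]
        rw [this, habc]; ring
      rcases ha.2.2 b hbD (c * ε') (mul_mem hcD hε'D) hag with h | h
      · exact Or.inl h
      · exact Or.inr (unit_factor' D hcD hε'D h)
  -- lifting whole factorizations
  have liftProd : ∀ k, ∀ u, u ∈ reg (R : Set T) → u ∉ unitsIn (D : Set T) →
      ∀ g : Fin k → T, (∀ i, IsAtomOf D (g i)) → u = ∏ i, g i →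
      ∃ f : Fin k → T, (∀ i, IsAtomOf R (f i)) ∧ u = ∏ i, f i := by
    intro k
    induction k with
    | zero =>
      intro u _ hnu g _ hprod
      exfalso
      apply hnu
      simp only [Finset.univ_eq_empty, Finset.prod_empty] at hprod
      exact ⟨hprod ▸ one_mem D, 1, one_mem D, by rw [hprod, one_mul]⟩
    | succ k IH =>
      intro u hu hnu g hg hprod
      rw [Fin.prod_univ_succ] at hprod
      have hcreg : (∏ i : Fin k, g i.succ) ∈ reg (D : Set T) :=
        prod_reg' D k _ (fun i => (hg i.succ).1)
      obtain ⟨v, hv, w, hw, ε, hε, η, hη, huvw, hvb, hwc⟩ :=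
        lift u hu.1 (g 0) (hg 0).1 _ hcreg hprod
      have hηu : η ∈ unitsIn (D : Set T) := unitsIn_reg'.mp hη
      have hvatom : IsAtomOf R v := assocAtomR (g 0) (hg 0) ε (unitsIn_reg'.mp hε) v hv hvb
      cases k with
      | zero =>
        have hwu : w ∈ unitsIn (D : Set T) := by
          rw [hwc]
          simp only [Finset.univ_eq_empty, Finset.prod_empty, one_mul]
          exact hηu
        have hwuR : w ∈ unitsIn (R : Set T) := unitR_of w hwu hw.1
        obtain ⟨_, w', hw', hww⟩ := hwuR
        have huatom : IsAtomOf R u := by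
          refine ⟨hu, fun h => hnu (unitRD u h), ?_⟩
          intro b' hb' c' hc' hubc
          have hveq : v = b' * (c' * w') := by
            have : v = u * w' := by rw [huvw, mul_assoc, hww, mul_one]
            rw [this, hubc]; ring
          rcases hvatom.2.2 b' hb' (c' * w') (mul_mem hc' hw') hveq with h | h
          · exact Or.inl h
          · obtain ⟨_, z, hz, hcz⟩ := h
            exact Or.inr ⟨hc', w' * z, mul_mem hw' hz, by rw [← mul_assoc]; exact hcz⟩
        exact ⟨fun _ => u, fun _ => huatom, by simp [Fin.prod_univ_one]⟩
      | succ j =>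
        have hcsplit : (∏ i : Fin (j + 1), g i.succ)
            = g (Fin.succ 0) * ∏ i : Fin j, g i.succ.succ := Fin.prod_univ_succ _
        set G : Fin (j + 1) → T :=
          Fin.cons (g (Fin.succ 0) * η) (fun i : Fin j => g i.succ.succ) with hG
        have hGatom : ∀ i, IsAtomOf D (G i) := by
          intro i
          induction i using Fin.cases with
          | zero => simpa [hG] using atomDU _ (hg (Fin.succ 0)) η hηu
          | succ i => simpa [hG] using hg i.succ.succ
        have hwG : w = ∏ i, G i := by
          rw [Fin.prod_univ_succ]
          simp only [hG, Fin.cons_zero, Fin.cons_succ]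
          rw [hwc, hcsplit]; ring
        have hwnu : w ∉ unitsIn (D : Set T) := by
          intro hwu
          apply (hg (Fin.succ 0)).2.1
          have hrestD : (∏ i : Fin j, g i.succ.succ) ∈ (D : Set T) :=
            (prod_reg' D j _ (fun i => (hg i.succ.succ).1)).1
          have hcu : (∏ i : Fin (j + 1), g i.succ) ∈ unitsIn (D : Set T) := by
            apply unit_factor' D hcreg.1 (unitsIn_reg'.mp hη).1
            rw [← hwc]; exact hwu
          rw [hcsplit] at hcu
          exact unit_factor' D (hg (Fin.succ 0)).1.1 hrestD hcu
        obtain ⟨f', hf', hwf'⟩ := IH w hw hwnu G hGatom hwG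
        refine ⟨Fin.cons v f', ?_, ?_⟩
        · intro i
          induction i using Fin.cases with
          | zero => simpa using hvatom
          | succ i => simpa using hf' i
        · rw [Fin.prod_univ_succ]
          simp only [Fin.cons_zero, Fin.cons_succ]
          rw [← hwf', ← huvw]
  -- equality of length sets for elements of R
  have lenEq : ∀ u, u ∈ reg (R : Set T) → lengthSet R u = lengthSet D u := by
    intro u hu
    ext k
    simp only [lengthSet, Set.mem_setOf_eq]
    constructor
    · rintro (⟨huu, hk⟩ | ⟨hnu, f, hf, hprod⟩)
      · exact Or.inl ⟨unitRD u huu, hk⟩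
      · exact Or.inr ⟨fun h => hnu (unitR_of u h hu.1), f,
          fun i => atomRD (f i) (hf i), hprod⟩
    · rintro (⟨huu, hk⟩ | ⟨hnu, g, hg, hprod⟩)
      · exact Or.inl ⟨unitR_of u huu hu.1, hk⟩
      · obtain ⟨f, hf, hp⟩ := liftProd k u hu hnu g hg hprod
        exact Or.inr ⟨fun h => hnu (unitRD u h), f, hf, hp⟩
  -- length sets in D are invariant under multiplication by units of D
  have lenU : ∀ x, x ∈ (D : Set T) → ∀ ε, ε ∈ unitsIn (D : Set T) →
      lengthSet D (x * ε) ⊆ lengthSet D x := by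
    intro x hxD ε hεu k hk
    obtain ⟨hεD, ε', hε'D, hεε⟩ := hεu
    have hεu : ε ∈ unitsIn (D : Set T) := ⟨hεD, ε', hε'D, hεε⟩
    have hε'u : ε' ∈ unitsIn (D : Set T) := ⟨hε'D, ε, hεD, by rw [mul_comm]; exact hεε⟩
    rcases hk with ⟨huu, hk⟩ | ⟨hnu, g, hg, hprod⟩
    · exact Or.inl ⟨unit_factor' D hxD hεD huu, hk⟩
    · have hxnu : x ∉ unitsIn (D : Set T) := fun h => hnu (unit_mul' D h hεu)
      cases k with
      | zero =>
        exfalso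
        simp only [Finset.univ_eq_empty, Finset.prod_empty] at hprod
        exact hnu ⟨hprod ▸ one_mem D, 1, one_mem D, by rw [hprod, one_mul]⟩
      | succ m =>
        rw [Fin.prod_univ_succ] at hprod
        refine Or.inr ⟨hxnu, Fin.cons (g 0 * ε') (fun i => g i.succ), ?_, ?_⟩
        · intro i
          induction i using Fin.cases with
          | zero => simpa using atomDU (g 0) (hg 0) ε' hε'u
          | succ i => simpa using hg i.succ
        · rw [Fin.prod_univ_succ]
          simp only [Fin.cons_zero, Fin.cons_succ]
          have : x = (x * ε) * ε' := by rw [mul_assoc, hεε, mul_one]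
          rw [this, hprod]; ring
  have lenEqD : ∀ x, x ∈ (D : Set T) → ∀ ε, ε ∈ unitsIn (D : Set T) →
      lengthSet D (x * ε) = lengthSet D x := by
    intro x hxD ε hεu
    obtain ⟨hεD, ε', hε'D, hεε⟩ := hεu
    have hεu : ε ∈ unitsIn (D : Set T) := ⟨hεD, ε', hε'D, hεε⟩
    have hε'u : ε' ∈ unitsIn (D : Set T) := ⟨hε'D, ε, hεD, by rw [mul_comm]; exact hεε⟩
    refine Set.Subset.antisymm (lenU x hxD ε hεu) ?_
    intro k hk
    have hx2 : x = (x * ε) * ε' := by rw [mul_assoc, hεε, mul_one]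
    rw [hx2] at hk
    exact lenU (x * ε) (mul_mem hxD hεD) ε' hε'u hk
  constructor
  · refine ⟨?_, ?_, ?_⟩
    · ext x
      constructor
      · intro hx
        obtain ⟨r, hrR, ε, hεu, hxr⟩ := hgen x hx.1
        obtain ⟨hεD, ε', hε'D, hεε⟩ := hεu
        have hεu : ε ∈ unitsIn (D : Set T) := ⟨hεD, ε', hε'D, hεε⟩
        have hε'u : ε' ∈ unitsIn (D : Set T) := ⟨hε'D, ε, hεD, by rw [mul_comm]; exact hεε⟩
        have hrreg : r ∈ reg (R : Set T) := by
          apply regRmem r hrR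
          have : r = x * ε' := by rw [hxr, mul_assoc, hεε, mul_one]
          rw [this]; exact reg_mul' hx (unit_reg' hε'u)
        exact ⟨r, hrreg, ε, unitsIn_reg'.mpr hεu, hxr⟩
      · rintro ⟨a, ha, uu, huu, rfl⟩
        exact reg_mul' (hRreg ha) huu.1
    · ext x
      constructor
      · rintro ⟨hxR, hxU⟩
        have hxRu : x ∈ unitsIn (R : Set T) := unitR_of x (unitsIn_reg'.mp hxU) hxR.1
        obtain ⟨_, y, hyR, hxy⟩ := hxRu
        have hyreg : y ∈ reg (R : Set T) := by
          refine ⟨hyR, fun z hz h0 => ?_⟩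
          have : x * (y * z) = z := by rw [← mul_assoc, hxy, one_mul]
          rw [← this, h0, mul_zero]
        exact ⟨hxR, y, hyreg, hxy⟩
      · rintro ⟨hx, y, hy, hxy⟩
        exact ⟨hx, ⟨hRreg hx, y, hRreg hy, hxy⟩⟩
    · intro u hu b hb c hc huv
      exact lift u hu.1 b hb c hc huv
  · ext S
    simp only [lengthSystem, Set.mem_setOf_eq]
    constructor
    · rintro ⟨a, ha, rfl⟩
      exact ⟨a, hRreg ha, lenEq a ha⟩
    · rintro ⟨d, hd, rfl⟩
      obtain ⟨r, hrR, ε, hεu, hdr⟩ := hgen d hd.1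
      obtain ⟨hεD, ε', hε'D, hεε⟩ := hεu
      have hεu : ε ∈ unitsIn (D : Set T) := ⟨hεD, ε', hε'D, hεε⟩
      have hε'u : ε' ∈ unitsIn (D : Set T) := ⟨hε'D, ε, hεD, by rw [mul_comm]; exact hεε⟩
      have hrreg : r ∈ reg (R : Set T) := by
        apply regRmem r hrR
        have : r = d * ε' := by rw [hdr, mul_assoc, hεε, mul_one]
        rw [this]; exact reg_mul' hd (unit_reg' hε'u)
      refine ⟨r, hrreg, ?_⟩
      rw [lenEq r hrreg, ← lenEqD r (hsub hrR) ε hεu, ← hdr]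


end Paper
end

section
/- Every Marot commutative ring that is primary is a weakly Krull ring. -/
namespace Paper

/-- `M` is an `R`-submodule of the ambient ring `T`. -/
def IsSubmoduleOf {T : Type*} [CommRing T] (R : Subring T) (M : Set T) : Prop :=
  (0 : T) ∈ M ∧ (∀ x ∈ M, ∀ y ∈ M, x + y ∈ M) ∧
    ∀ r ∈ (R : Set T), ∀ x ∈ M, r * x ∈ M

/-- `I` is an (integral) ideal of the subring `R`. -/
def IsIdealOf {T : Type*} [CommRing T] (R : Subring T) (I : Set T) : Prop :=
  IsSubmoduleOf R I ∧ I ⊆ (R : Set T)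

/-- `P` is a prime ideal of the subring `R`. -/
def IsPrimeIdealOf {T : Type*} [CommRing T] (R : Subring T) (P : Set T) : Prop :=
  IsIdealOf R P ∧ P ≠ (R : Set T) ∧
    ∀ x ∈ (R : Set T), ∀ y ∈ (R : Set T), x * y ∈ P → x ∈ P ∨ y ∈ P

/-- The ideal of the subring `R` generated by a subset `X` of `R`:
all finite sums `∑ rᵢ·xᵢ` with `rᵢ ∈ R`, `xᵢ ∈ X`. -/
def idealGen {T : Type*} [CommRing T] (R : Subring T) (X : Set T) : Set T :=
  {x : T | ∃ (k : ℕ) (r a : Fin k → T),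
    (∀ i, r i ∈ R) ∧ (∀ i, a i ∈ X) ∧ x = ∑ i, r i * a i}

/-- `R` is a Marot ring: every regular integral ideal of `R` is generated by
its regular elements. -/
def IsMarot {T : Type*} [CommRing T] (R : Subring T) : Prop :=
  ∀ I : Set T, IsIdealOf R I → (∃ x ∈ I, x ∈ reg (R : Set T)) →
    I = idealGen R (I ∩ reg (R : Set T))

/-- The ring `R` is primary: the monoid `R^•` of regular elements is primary,
i.e. `R^• ≠ R^×` and for all regular non-units `a`, `b` some power of `b`
lies in `a·R^•`. -/
def IsPrimaryRing {T : Type*} [CommRing T] (R : Subring T) : Prop :=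
  reg (R : Set T) ≠ unitsIn (R : Set T) ∧
    ∀ a ∈ reg (R : Set T), a ∉ unitsIn (R : Set T) →
      ∀ b ∈ reg (R : Set T), b ∉ unitsIn (R : Set T) →
        ∃ n : ℕ, 0 < n ∧ ∃ h ∈ reg (R : Set T), b ^ n = a * h

/-- `X_r(R)`: the set of regular prime ideals of `R` of regular height one,
i.e. those regular prime ideals containing no strictly smaller regular prime
ideal. -/
def regHtOne {T : Type*} [CommRing T] (R : Subring T) : Set (Set T) :=
  {P | IsPrimeIdealOf R P ∧ (∃ x ∈ P, x ∈ reg (R : Set T)) ∧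
    ∀ Q : Set T, IsPrimeIdealOf R Q → (∃ x ∈ Q, x ∈ reg (R : Set T)) → Q ⊆ P → Q = P}

/-- `R_[P] = {z ∈ T : z·s ∈ R for some s ∈ R ∖ P}`. -/
def locB {T : Type*} [CommRing T] (R : Subring T) (P : Set T) : Set T :=
  {z : T | ∃ s ∈ (R : Set T), s ∉ P ∧ z * s ∈ R}

/-- `R` is a weakly Krull ring: `R = ⋂_{P ∈ X_r(R)} R_[P]` and every regular
element of `R` lies in only finitely many members of `X_r(R)`. -/
def IsWeaklyKrull {T : Type*} [CommRing T] (R : Subring T) : Prop :=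
  ((R : Set T) = ⋂ P ∈ regHtOne R, locB R P) ∧
    ∀ x ∈ reg (R : Set T), {P ∈ regHtOne R | x ∈ P}.Finite

section Aux

variable {T : Type*} [CommRing T] (R : Subring T)

lemma unitsIn_subset_reg : unitsIn (R : Set T) ⊆ reg (R : Set T) := by
  rintro x ⟨hx, y, hy, hxy⟩
  refine ⟨hx, fun z hz hxz => ?_⟩
  have : z = y * (x * z) := by rw [← mul_assoc, mul_comm y x, hxy, one_mul]
  rw [hxz, mul_zero] at this
  exact this

/-- The subset of `T` corresponding to an ideal of the subring `R`. -/
def toSet (J : Ideal ↥R) : Set T := Subtype.val '' (J : Set ↥R)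

lemma mem_toSet {J : Ideal ↥R} {x : T} :
    x ∈ toSet R J ↔ ∃ hx : x ∈ R, (⟨x, hx⟩ : ↥R) ∈ J := by
  constructor
  · rintro ⟨b, hb, rfl⟩
    exact ⟨b.2, hb⟩
  · rintro ⟨hx, h⟩
    exact ⟨⟨x, hx⟩, h, rfl⟩

lemma isIdealOf_toSet (J : Ideal ↥R) : IsIdealOf R (toSet R J) := by
  refine ⟨⟨⟨0, J.zero_mem, rfl⟩, ?_, ?_⟩, ?_⟩
  · rintro x ⟨b, hb, rfl⟩ y ⟨c, hc, rfl⟩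
    exact ⟨b + c, J.add_mem hb hc, rfl⟩
  · rintro r hr x ⟨b, hb, rfl⟩
    exact ⟨⟨r, hr⟩ * b, J.mul_mem_left _ hb, rfl⟩
  · rintro x ⟨b, _, rfl⟩
    exact b.2

lemma idealGen_subset {X P : Set T} (hXP : X ⊆ P) (hP : IsIdealOf R P) :
    idealGen R X ⊆ P := by
  rintro x ⟨k, r, c, hr, hc, rfl⟩
  refine Finset.sum_induction _ (· ∈ P) (fun a b ha hb => hP.1.2.1 a ha b hb) hP.1.1 ?_
  intro i _
  exact hP.1.2.2 (r i) (hr i) (c i) (hXP (hc i))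

lemma toSet_span_subset {N P : Set T} (hNP : N ⊆ P) (hP : IsIdealOf R P) :
    toSet R (Ideal.span {a : ↥R | (a : T) ∈ N}) ⊆ P := by
  intro x hx
  rw [mem_toSet] at hx
  obtain ⟨hxR, hxJ⟩ := hx
  let P' : Ideal ↥R :=
    { carrier := {b : ↥R | (b : T) ∈ P}
      zero_mem' := hP.1.1
      add_mem' := fun {b c} hb hc => hP.1.2.1 _ hb _ hc
      smul_mem' := fun c b hb => hP.1.2.2 (c : T) c.2 (b : T) hb }
  have hle : Ideal.span {a : ↥R | (a : T) ∈ N} ≤ P' :=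
    Ideal.span_le.mpr (fun a ha => hNP ha)
  exact hle hxJ

end Aux

/-- every Marot primary commutative ring is a weakly Krull ring. -/
theorem stmt16 {T : Type*} [CommRing T] [Nontrivial T] (R : Subring T)
    (hreg : ∀ x ∈ reg (R : Set T), IsUnit x)
    (hfr : ∀ t : T, ∃ r ∈ (R : Set T), ∃ s ∈ reg (R : Set T), t * s = r)
    (hmarot : IsMarot R)
    (hprim : IsPrimaryRing R) :
    IsWeaklyKrull R := by
  obtain ⟨hne, hpp⟩ := hprim
  -- the set of regular non-units
  set N : Set T := reg (R : Set T) \ unitsIn (R : Set T) with hNdef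
  have hNex : ∃ a, a ∈ N := by
    by_contra h
    push_neg at h
    apply hne
    refine subset_antisymm (fun x hx => ?_) (unitsIn_subset_reg R)
    by_contra hxu
    exact h x ⟨hx, hxu⟩
  obtain ⟨a, haReg, haNU⟩ := hNex
  have haR : a ∈ R := haReg.1
  set J : Ideal ↥R := Ideal.span {b : ↥R | (b : T) ∈ N} with hJdef
  set M : Set T := toSet R J with hMdef
  have hMideal : IsIdealOf R M := isIdealOf_toSet R J
  have hNM : N ⊆ M := by
    intro b hb
    exact (mem_toSet R).mpr ⟨hb.1.1, Ideal.subset_span hb⟩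
  have haM : a ∈ M := hNM ⟨haReg, haNU⟩
  -- M is a proper ideal: 1 ∉ M, via the primary property
  have h1M : (1 : T) ∉ M := by
    intro h1
    rw [mem_toSet] at h1
    obtain ⟨h1R, h1J⟩ := h1
    have hJrad : J ≤ (Ideal.span {(⟨a, haR⟩ : ↥R)}).radical := by
      rw [hJdef]
      refine Ideal.span_le.mpr ?_
      intro b hb
      obtain ⟨n, hn, h, hh, hbn⟩ := hpp a haReg haNU (b : T) hb.1 hb.2
      refine Ideal.mem_radical_iff.mpr ⟨n, Ideal.mem_span_singleton.mpr ⟨⟨h, hh.1⟩, ?_⟩⟩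
      ext
      push_cast
      exact hbn
    have h1rad := hJrad h1J
    rw [Ideal.mem_radical_iff] at h1rad
    obtain ⟨n, hn⟩ := h1rad
    have : (⟨(1 : T), h1R⟩ : ↥R) = 1 := rfl
    rw [this, one_pow, Ideal.mem_span_singleton] at hn
    obtain ⟨c, hc⟩ := hn
    have hcT : (1 : T) = a * (c : T) := congrArg Subtype.val hc
    exact haNU ⟨haR, (c : T), c.2, hcT.symm⟩
  -- key consequence of Marot: an ideal containing a regular element and an
  -- element outside M contains 1
  have key : ∀ I : Set T, IsIdealOf R I → (∃ x ∈ I, x ∈ reg (R : Set T)) →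
      (∃ s ∈ I, s ∉ M) → (1 : T) ∈ I := by
    intro I hI hIreg ⟨s, hsI, hsM⟩
    have hM := hmarot I hI hIreg
    by_cases hsub : I ∩ reg (R : Set T) ⊆ M
    · exfalso
      apply hsM
      have : I ⊆ M := by
        rw [hM]
        exact idealGen_subset R hsub hMideal
      exact this hsI
    · obtain ⟨v, hv, hvM⟩ := Set.not_subset.mp hsub
      have hvU : v ∈ unitsIn (R : Set T) := by
        by_contra hvu
        exact hvM (hNM ⟨hv.2, hvu⟩)
      obtain ⟨hvR, w, hwR, hvw⟩ := hvU
      have : w * v ∈ I := hI.1.2.2 w hwR v hv.1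
      rwa [mul_comm, hvw] at this
  -- M is prime
  have hMR : M ⊆ (R : Set T) := hMideal.2
  have hMne : M ≠ (R : Set T) := by
    intro h
    exact h1M (h.symm ▸ R.one_mem)
  have hMprime : IsPrimeIdealOf R M := by
    refine ⟨hMideal, hMne, ?_⟩
    intro x hxR y hyR hxy
    by_contra hcon
    push_neg at hcon
    obtain ⟨hxM, hyM⟩ := hcon
    -- build the ideal M + R·x (and M + R·y)
    have build : ∀ z : T, z ∈ (R : Set T) → z ∉ M →
        ∃ m ∈ M, ∃ r ∈ (R : Set T), (1 : T) = m + r * z := by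
      intro z hzR hzM
      set I : Set T := {t : T | ∃ m ∈ M, ∃ r ∈ (R : Set T), t = m + r * z} with hIdef
      have hIideal : IsIdealOf R I := by
        refine ⟨⟨⟨0, hMideal.1.1, 0, R.zero_mem, by ring⟩, ?_, ?_⟩, ?_⟩
        · rintro t ⟨m, hm, r, hr, rfl⟩ t' ⟨m', hm', r', hr', rfl⟩
          exact ⟨m + m', hMideal.1.2.1 m hm m' hm', r + r', R.add_mem hr hr', by ring⟩
        · rintro c hc t ⟨m, hm, r, hr, rfl⟩
          exact ⟨c * m, hMideal.1.2.2 c hc m hm, c * r, R.mul_mem hc hr, by ring⟩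
        · rintro t ⟨m, hm, r, hr, rfl⟩
          exact R.add_mem (hMR hm) (R.mul_mem hr hzR)
      have h1I : (1 : T) ∈ I := by
        refine key I hIideal ⟨a, ⟨a, haM, 0, R.zero_mem, by ring⟩, haReg⟩
          ⟨z, ⟨0, hMideal.1.1, 1, R.one_mem, by ring⟩, hzM⟩
      exact h1I
    obtain ⟨m, hm, r, hr, he⟩ := build x hxR hxM
    obtain ⟨m', hm', r', hr', he'⟩ := build y hyR hyM
    apply h1M
    have e : (1 : T) = m' * m + (r * x) * m' + (m * (r' * y)) + (r * r') * (x * y) := by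
      calc (1 : T) = (m + r * x) * (m' + r' * y) := by rw [← he, ← he']; ring
      _ = _ := by ring
    rw [e]
    refine hMideal.1.2.1 _ (hMideal.1.2.1 _ (hMideal.1.2.1 _ ?_ _ ?_) _ ?_) _ ?_
    · exact hMideal.1.2.2 m' (hMR hm') m hm
    · exact hMideal.1.2.2 (r * x) (R.mul_mem hr hxR) m' hm'
    · have : (m * (r' * y)) = (r' * y) * m := by ring
      rw [this]
      exact hMideal.1.2.2 (r' * y) (R.mul_mem hr' hyR) m hm
    · exact hMideal.1.2.2 (r * r') (R.mul_mem hr hr') (x * y) hxy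
  -- every regular prime contains M
  have hPM : ∀ P : Set T, IsPrimeIdealOf R P → (∃ x ∈ P, x ∈ reg (R : Set T)) →
      M ⊆ P := by
    intro P hP hPreg
    obtain ⟨p, hpP, hpreg⟩ := hPreg
    have hPproper : ∀ t : T, t ∈ P → t ∉ unitsIn (R : Set T) := by
      intro t htP htu
      obtain ⟨htR, w, hwR, htw⟩ := htu
      have h1P : (1 : T) ∈ P := by
        have := hP.1.1.2.2 w hwR t htP
        rwa [mul_comm, htw] at this
      apply hP.2.1
      refine subset_antisymm hP.1.2 (fun r hr => ?_)
      have := hP.1.1.2.2 r hr 1 h1P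
      rwa [mul_one] at this
    have hpNU : p ∉ unitsIn (R : Set T) := hPproper p hpP
    have hNP : N ⊆ P := by
      rintro b ⟨hbreg, hbNU⟩
      obtain ⟨n, hn, h, hh, hbn⟩ := hpp p hpreg hpNU b hbreg hbNU
      have hbR : b ∈ R := hbreg.1
      have hbnP : b ^ n ∈ P := by
        rw [hbn, mul_comm]
        exact hP.1.1.2.2 h hh.1 p hpP
      clear hbn
      induction n with
      | zero => omega
      | succ k ih =>
        rw [pow_succ, mul_comm] at hbnP
        rcases hP.2.2 b hbR (b ^ k) (R.pow_mem hbR k) hbnP with h1 | h2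
        · exact h1
        · rcases Nat.eq_zero_or_pos k with hk | hk
          · exfalso
            rw [hk, pow_zero] at h2
            exact hPproper 1 h2 ⟨R.one_mem, 1, R.one_mem, one_mul 1⟩
          · exact ih hk h2
    exact toSet_span_subset R hNP hP.1
  have hMreg : ∃ x ∈ M, x ∈ reg (R : Set T) := ⟨a, haM, haReg⟩
  have hMht : M ∈ regHtOne R :=
    ⟨hMprime, hMreg, fun Q hQ hQreg hQM => subset_antisymm hQM (hPM Q hQ hQreg)⟩
  have hX : regHtOne R = {M} := by
    ext P
    simp only [Set.mem_singleton_iff]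
    constructor
    · rintro ⟨hP, hPreg, hPmin⟩
      exact (hPmin M hMprime hMreg (hPM P hP hPreg)).symm
    · rintro rfl
      exact hMht
  constructor
  · rw [hX]
    rw [Set.biInter_singleton]
    ext z
    constructor
    · intro hz
      exact ⟨1, R.one_mem, h1M, by rwa [mul_one]⟩
    · rintro ⟨s, hsR, hsM, hzs⟩
      set I : Set T := {t : T | t ∈ R ∧ z * t ∈ R} with hIdef
      have hIideal : IsIdealOf R I := by
        refine ⟨⟨⟨R.zero_mem, by rw [mul_zero]; exact R.zero_mem⟩, ?_, ?_⟩, fun t ht => ht.1⟩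
        · rintro t ⟨ht, hzt⟩ t' ⟨ht', hzt'⟩
          exact ⟨R.add_mem ht ht', by rw [mul_add]; exact R.add_mem hzt hzt'⟩
        · rintro c hc t ⟨ht, hzt⟩
          refine ⟨R.mul_mem hc ht, ?_⟩
          have : z * (c * t) = c * (z * t) := by ring
          rw [this]
          exact R.mul_mem hc hzt
      obtain ⟨r, hr, u, hu, hzu⟩ := hfr z
      have h1I : (1 : T) ∈ I :=
        key I hIideal ⟨u, ⟨hu.1, hzu ▸ hr⟩, hu⟩ ⟨s, ⟨hsR, hzs⟩, hsM⟩
      have := h1I.2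
      rwa [mul_one] at this
  · intro x hx
    refine Set.Finite.subset (Set.finite_singleton M) ?_
    intro P hP
    have := hX ▸ hP.1
    exact this

end Paper
end
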